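/- arXiv:0908.0439 — 2 statements merged into one kernel-verified Lean document; each statement's English description precedes it below -/
import Mathlib

section
/- Let 𝒳 be a sofic shift which is not minimal. Then there exists a subshift 𝒴 (over some finite alphabet Y) conjugate to 𝒳, together with a non-empty word z ∈ L(𝒴), such that zⁿ ∈ L(𝒴) for all n ≥ 1 and the set of letters occurring in z is a proper subset of alph(𝒴). -/
/-- The shift map on biinfinite sequences. -/
def shiftMap (X : Type*) : (ℤ → X) → (ℤ → X) := fun x i => x (i + 1)

/-- A subshift: a non-empty, closed, shift-invariant subset of `X^ℤ`. -/
def IsSubshift {X : Type*} [TopologicalSpace X] (𝒳 : Set (ℤ → X)) : Prop :=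
  𝒳.Nonempty ∧ IsClosed 𝒳 ∧ shiftMap X '' 𝒳 = 𝒳

/-- The finite word `x_i x_{i+1} ⋯ x_{i+n-1}` read in the point `x`. -/
def wordAt {X : Type*} (x : ℤ → X) (i : ℤ) (n : ℕ) : List X :=
  (List.range n).map fun k => x (i + k)

/-- The language of a subshift: the set of (non-empty) finite factors of its points. -/
def shiftLang {X : Type*} (𝒳 : Set (ℤ → X)) : Set (List X) :=
  {w | w ≠ [] ∧ ∃ x ∈ 𝒳, ∃ i : ℤ, w = wordAt x i w.length}

/-- Two subshifts are (topologically) conjugate if there is a homeomorphism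
between them commuting with the respective shift maps. -/
def AreConjugate {X Y : Type*} [TopologicalSpace X] [TopologicalSpace Y]
    (𝒳 : Set (ℤ → X)) (𝒴 : Set (ℤ → Y)) : Prop :=
  ∃ φ : 𝒳 ≃ₜ 𝒴, ∀ x x' : 𝒳, (x' : ℤ → X) = shiftMap X x →
    (φ x' : ℤ → Y) = shiftMap Y (φ x)

/-- The `n`-th power (concatenation) of a word. -/
def wordPow {X : Type*} (n : ℕ) (u : List X) : List X := (List.replicate n u).flatten

/-!
Take a proper subshift `𝒳' ⊂ 𝒳` and a word `w ∈ L(𝒳) \ L(𝒳')` of length `N`. Reading a point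
`x ∈ 𝒳'` with a finite automaton for `L(𝒳)`, the pigeonhole principle gives a factor
`y = x[i, i + p)` after which the automaton is back in the same state and which is followed by the
same `N`-block as the one at `i`. So all powers of `y` lie in `L(𝒳)`, the periodic point `y^∞`
lies in `𝒳`, and each `N`-block of `y^∞` is an `N`-block of `x`, hence lies in `L(𝒳')`. In the
`N`-block presentation of `𝒳`, the letters of the coded period of `y^∞` are therefore all
different from the letter coding `w`.
-/

open Function

section Words

variable {X : Type*}

-- `wordAt` elaborates its index list as `List.range n` lifted to `List ℤ` by a monadic bind.
theorem wordAt_eq_map (x : ℤ → X) (i : ℤ) (n : ℕ) :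
    wordAt x i n = (List.range n).map fun k : ℕ => x (i + k) := by
  simp [wordAt, ← List.map_eq_flatMap]

theorem wordAt_length (x : ℤ → X) (i : ℤ) (n : ℕ) : (wordAt x i n).length = n := by
  simp [wordAt_eq_map]

theorem wordAt_ne_nil (x : ℤ → X) (i : ℤ) {n : ℕ} (hn : 0 < n) : wordAt x i n ≠ [] := by
  rwa [← List.length_pos_iff, wordAt_length]

theorem wordAt_add (x : ℤ → X) (i : ℤ) (m n : ℕ) :
    wordAt x i (m + n) = wordAt x i m ++ wordAt x (i + m) n := by
  simp only [wordAt_eq_map, List.range_add, List.map_append, List.map_map]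
  congr 1
  refine List.map_congr_left fun k _ => ?_
  simp [add_assoc]

theorem wordAt_isInfix (x : ℤ → X) (i : ℤ) (a m b : ℕ) :
    wordAt x (i + a) m <:+: wordAt x i (a + m + b) := by
  rw [wordAt_add, wordAt_add]
  exact ⟨_, _, rfl⟩

theorem wordAt_eq_wordAt_iff {x y : ℤ → X} {i j : ℤ} {n : ℕ} :
    wordAt x i n = wordAt y j n ↔ ∀ k < n, x (i + k) = y (j + k) := by
  simp [wordAt_eq_map, List.map_inj_left]

theorem mem_wordAt_iff {x : ℤ → X} {i : ℤ} {n : ℕ} {a : X} :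
    a ∈ wordAt x i n ↔ ∃ k < n, x (i + k) = a := by
  simp [wordAt_eq_map]

theorem wordPow_succ (n : ℕ) (u : List X) : wordPow (n + 1) u = u ++ wordPow n u := by
  simp [wordPow, List.replicate_succ]

theorem wordPow_ne_nil {n : ℕ} (hn : 0 < n) {u : List X} (hu : u ≠ []) : wordPow n u ≠ [] := by
  obtain ⟨n, rfl⟩ := Nat.exists_eq_add_one_of_ne_zero hn.ne'
  simp [wordPow_succ, hu]

theorem Function.Periodic.wordAt_add_int_mul {x : ℤ → X} {p : ℤ} (h : Periodic x p)
    (i m : ℤ) (n : ℕ) : wordAt x (i + m * p) n = wordAt x i n :=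
  wordAt_eq_wordAt_iff.2 fun k _ => by simpa [add_right_comm] using h.int_mul m (i + k)

theorem Function.Periodic.wordAt_mul {x : ℤ → X} {p : ℕ} (h : Periodic x p) (i : ℤ) (n : ℕ) :
    wordAt x i (n * p) = wordPow n (wordAt x i p) := by
  induction n with
  | zero => simp [wordAt_eq_map, wordPow]
  | succ n ih =>
    rw [wordPow_succ, ← ih, add_mul, one_mul, add_comm, wordAt_add]
    simpa using congrArg (wordAt x i p ++ ·) (h.wordAt_add_int_mul i 1 (n * p))

end Words

section Language

variable {X : Type*} {𝒳 : Set (ℤ → X)}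

theorem mem_shiftLang_wordAt {x : ℤ → X} (hx : x ∈ 𝒳) (i : ℤ) {n : ℕ} (hn : 0 < n) :
    wordAt x i n ∈ shiftLang 𝒳 :=
  ⟨wordAt_ne_nil x i hn, x, hx, i, by rw [wordAt_length]⟩

theorem singleton_mem_shiftLang {x : ℤ → X} (hx : x ∈ 𝒳) (i : ℤ) : [x i] ∈ shiftLang 𝒳 := by
  simpa [wordAt_eq_map] using mem_shiftLang_wordAt hx i one_pos

theorem mem_shiftLang_of_isInfix {u v : List X} (huv : u <:+: v) (hv : v ∈ shiftLang 𝒳)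
    (hu : u ≠ []) : u ∈ shiftLang 𝒳 := by
  obtain ⟨a, c, rfl⟩ := huv
  obtain ⟨-, x, hx, i, hv⟩ := hv
  rw [List.length_append, List.length_append, wordAt_add, wordAt_add] at hv
  obtain ⟨hac, -⟩ := List.append_inj hv.symm (by simp [wordAt_length])
  exact ⟨hu, x, hx, i + a.length, (List.append_inj hac (by simp [wordAt_length])).2.symm⟩

theorem singleton_mem_shiftLang_of_mem {u : List X} {a : X} (ha : a ∈ u)
    (hu : u ∈ shiftLang 𝒳) : [a] ∈ shiftLang 𝒳 :=
  mem_shiftLang_of_isInfix ((List.singleton_infix_iff a u).2 ha) hu (List.cons_ne_nil a [])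

end Language

section Subshift

variable {X : Type*} [TopologicalSpace X] {𝒳 : Set (ℤ → X)}

theorem IsSubshift.comp_add_mem (h : IsSubshift 𝒳) {x : ℤ → X} (hx : x ∈ 𝒳) (j : ℤ) :
    (fun k => x (k + j)) ∈ 𝒳 := by
  induction j using Int.induction_on with
  | zero => simpa using hx
  | succ j ih =>
    rw [← h.2.2]
    exact ⟨_, ih, funext fun k => congrArg x (by ring)⟩
  | pred j ih =>
    rw [← h.2.2] at ih
    obtain ⟨y, hy, hyx⟩ := ih
    convert hy using 1
    funext k
    have := congrFun hyx (k - 1)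
    simp only [shiftMap, sub_add_cancel] at this
    rw [this]
    congr 1
    ring

theorem IsSubshift.mem_of_forall_wordAt_mem (h : IsSubshift 𝒳) {x : ℤ → X}
    (hx : ∀ n : ℕ, wordAt x (-n) (2 * n + 1) ∈ shiftLang 𝒳) : x ∈ 𝒳 := by
  have happrox : ∀ n : ℕ, ∃ y ∈ 𝒳, ∀ k : ℤ, -(n : ℤ) ≤ k → k ≤ n → y k = x k := by
    intro n
    obtain ⟨-, y, hy, i, hyx⟩ := hx n
    rw [wordAt_length, wordAt_eq_wordAt_iff] at hyx
    refine ⟨fun k => y (k + (i + n)), h.comp_add_mem hy _, fun k hk₁ hk₂ => ?_⟩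
    have := hyx (k + n).toNat (by omega)
    rw [Int.toNat_of_nonneg (by omega)] at this
    convert this.symm using 2 <;> ring
  choose y hy hyx using happrox
  have hlim : Filter.Tendsto y Filter.atTop (nhds x) := tendsto_pi_nhds.2 fun k =>
    tendsto_atTop_of_eventually_const (i₀ := k.natAbs) fun n hn => hyx n k (by omega) (by omega)
  exact h.2.1.mem_of_tendsto hlim (.of_forall hy)

theorem IsSubshift.subset_of_shiftLang_subset {𝒳' : Set (ℤ → X)} (h' : IsSubshift 𝒳')
    (hL : shiftLang 𝒳 ⊆ shiftLang 𝒳') : 𝒳 ⊆ 𝒳' :=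
  fun _ hx => h'.mem_of_forall_wordAt_mem fun _ => hL (mem_shiftLang_wordAt hx _ (by omega))

theorem IsSubshift.mem_of_periodic (h : IsSubshift 𝒳) {x : ℤ → X} {p : ℕ}
    (hper : Periodic x p) (hp : 0 < p)
    (hpow : ∀ n, 0 < n → wordAt x 0 (n * p) ∈ shiftLang 𝒳) : x ∈ 𝒳 := by
  refine h.mem_of_forall_wordAt_mem fun n => ?_
  set r := (-(n : ℤ) % p).toNat
  have hr : (r : ℤ) = -n % p := Int.toNat_of_nonneg (Int.emod_nonneg _ (by omega))
  have hshift : wordAt x (-n) (2 * n + 1) = wordAt x (0 + r) (2 * n + 1) := by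
    rw [← hper.wordAt_add_int_mul (0 + r) (-n / p), zero_add, hr, add_comm (-(n : ℤ) % p),
      Int.ediv_mul_add_emod]
  set K := r + (2 * n + 1)
  have hK : K ≤ K * p := Nat.le_mul_of_pos_right K hp
  rw [hshift]
  refine mem_shiftLang_of_isInfix ?_ (hpow K (by omega)) (wordAt_ne_nil _ _ (by omega))
  convert wordAt_isInfix x 0 r (2 * n + 1) (K * p - K) using 2
  omega

end Subshift

section Image

variable {X Y : Type*} [TopologicalSpace X] [CompactSpace X] [TopologicalSpace Y] [T2Space Y]
  {𝒳 : Set (ℤ → X)} {φ : (ℤ → X) → (ℤ → Y)}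

theorem IsSubshift.image (h : IsSubshift 𝒳) (hφ : Continuous φ)
    (hcomm : ∀ x, φ (shiftMap X x) = shiftMap Y (φ x)) : IsSubshift (φ '' 𝒳) := by
  refine ⟨h.1.image φ, (h.2.1.isCompact.image hφ).isClosed, ?_⟩
  simp_rw [Set.image_image, ← hcomm]
  rw [← Set.image_image, h.2.2]

theorem areConjugate_image (h𝒳 : IsClosed 𝒳) (hφ : Continuous φ) (hinj : Set.InjOn φ 𝒳)
    (hcomm : ∀ x, φ (shiftMap X x) = shiftMap Y (φ x)) : AreConjugate 𝒳 (φ '' 𝒳) := by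
  have : CompactSpace 𝒳 := isCompact_iff_compactSpace.mp h𝒳.isCompact
  refine ⟨Continuous.homeoOfEquivCompactToT2 (f := Equiv.Set.imageOfInjOn φ 𝒳 hinj)
    ((hφ.comp continuous_subtype_val).subtype_mk _), fun x x' hx' => ?_⟩
  change φ x' = shiftMap Y (φ x)
  rw [hx', hcomm]

end Image

section BlockCode

variable {X Y : Type*}

def blockCode (e : X → Y) (N : ℕ) (x : ℤ → X) : ℤ → Fin N → Y := fun t k => e (x (t + k))

variable {e : X → Y} {N : ℕ}

theorem blockCode_shiftMap (x : ℤ → X) :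
    blockCode e N (shiftMap X x) = shiftMap (Fin N → Y) (blockCode e N x) := by
  funext t k
  simp only [blockCode, shiftMap, add_right_comm]

theorem continuous_blockCode [TopologicalSpace X] [DiscreteTopology X] [TopologicalSpace Y] :
    Continuous (blockCode e N) :=
  continuous_pi fun t => continuous_pi fun k =>
    (continuous_of_discreteTopology (f := e)).comp (continuous_apply (t + k))

theorem blockCode_eq_blockCode_iff (he : Injective e) {x y : ℤ → X} {i j : ℤ} :
    blockCode e N x i = blockCode e N y j ↔ wordAt x i N = wordAt y j N := by
  rw [wordAt_eq_wordAt_iff, funext_iff]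
  simp [blockCode, he.eq_iff, Fin.forall_iff]

theorem blockCode_injective (he : Injective e) (hN : 0 < N) : Injective (blockCode e N) :=
  fun x y hxy => funext fun t => by
    simpa using wordAt_eq_wordAt_iff.1 ((blockCode_eq_blockCode_iff he).1 (congrFun hxy t)) 0 hN

theorem Function.Periodic.blockCode {x : ℤ → X} {p : ℤ} (h : Periodic x p) :
    Periodic (_root_.blockCode e N x) p :=
  fun t => funext fun k => by simp only [_root_.blockCode, add_right_comm t p, h (t + k)]

end BlockCode

theorem DFA.append_wordPow_mem_accepts {α σ : Type*} (M : DFA α σ) {u y : List α}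
    (hy : M.eval (u ++ y) = M.eval u) (hu : u ∈ M.accepts) (n : ℕ) :
    u ++ wordPow n y ∈ M.accepts := by
  rw [DFA.eval, DFA.evalFrom_of_append] at hy
  rw [DFA.mem_accepts, DFA.eval, DFA.evalFrom_of_append, M.evalFrom_of_pow hy]
  · exact hu
  · exact Language.mem_kstar.2 ⟨List.replicate n y, rfl, fun v hv => List.eq_of_mem_replicate hv⟩

theorem exists_pumpable_factor {X : Type*} [Finite X] {𝒳 : Set (ℤ → X)}
    (hL : Language.IsRegular (shiftLang 𝒳)) {x : ℤ → X} (hx : x ∈ 𝒳) (N : ℕ) :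
    ∃ i : ℤ, ∃ p : ℕ, 0 < p ∧ (∀ n, 0 < n → wordPow n (wordAt x i p) ∈ shiftLang 𝒳) ∧
      wordAt x (i + p) N = wordAt x i N := by
  obtain ⟨σ, _, M, hM⟩ := hL
  -- prefixes of length `a + 1`, since the empty word is not in the language
  obtain ⟨a, b, hab, hab'⟩ := Set.finite_univ.exists_lt_map_eq_of_forall_mem
    (f := fun a : ℕ => (M.eval (wordAt x 0 (a + 1)), blockCode id N x ((a + 1 : ℕ) : ℤ)))
    fun _ => Set.mem_univ _
  obtain ⟨hstate, hblock⟩ := Prod.ext_iff.1 hab'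
  have hsplit : wordAt x 0 (b + 1) = wordAt x 0 (a + 1) ++ wordAt x (a + 1 : ℕ) (b - a) := by
    rw [← zero_add ((a + 1 : ℕ) : ℤ), ← wordAt_add]
    congr 1
    omega
  refine ⟨(a + 1 : ℕ), b - a, by omega, fun n hn => ?_, ?_⟩
  · have hacc := M.append_wordPow_mem_accepts (hsplit ▸ hstate.symm)
      (hM ▸ mem_shiftLang_wordAt hx 0 a.succ_pos) n
    rw [hM] at hacc
    exact mem_shiftLang_of_isInfix (List.suffix_append _ _).isInfix hacc
      (wordPow_ne_nil hn (wordAt_ne_nil _ _ (by omega)))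
  · convert ((blockCode_eq_blockCode_iff injective_id).1 hblock.symm) using 2
    push_cast
    omega

section PeriodicExtension

variable {X : Type*}

def periodicExtension (x : ℤ → X) (i : ℤ) (p : ℕ) : ℤ → X := fun s => x (i + s % p)

theorem periodic_periodicExtension (x : ℤ → X) (i : ℤ) (p : ℕ) :
    Periodic (periodicExtension x i p) p :=
  fun s => by simp [periodicExtension]

theorem periodicExtension_of_lt {x : ℤ → X} {i : ℤ} {p s : ℕ} (hs : s < p) :
    periodicExtension x i p s = x (i + s) := by
  rw [periodicExtension, Int.emod_eq_of_lt (by omega) (by omega)]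

theorem wordAt_periodicExtension_zero (x : ℤ → X) (i : ℤ) (p : ℕ) :
    wordAt (periodicExtension x i p) 0 p = wordAt x i p :=
  wordAt_eq_wordAt_iff.2 fun _ hk => by rw [zero_add, periodicExtension_of_lt hk]

theorem wordAt_periodicExtension {x : ℤ → X} {i : ℤ} {p N : ℕ}
    (hN : wordAt x (i + p) N = wordAt x i N) {m : ℕ} (hm : m < p) :
    wordAt (periodicExtension x i p) m N = wordAt x (i + m) N := by
  have hagree : ∀ s : ℕ, s < p + N → periodicExtension x i p s = x (i + s) := by
    intro s
    induction s using Nat.strong_induction_on with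
    | _ s ih =>
      intro hs
      rcases lt_or_ge s p with hsp | hsp
      · exact periodicExtension_of_lt hsp
      obtain ⟨r, rfl⟩ := Nat.exists_eq_add_of_le hsp
      have hr := wordAt_eq_wordAt_iff.1 hN r (by omega)
      rw [Nat.cast_add, add_comm (p : ℤ), periodic_periodicExtension x i p, ih r (by omega)
        (by omega), ← hr]
      congr 1
      ring
  refine wordAt_eq_wordAt_iff.2 fun k hk => ?_
  simpa [add_assoc] using hagree (m + k) (by omega)

end PeriodicExtension

theorem IsSubshift.exists_periodic_mem_of_isRegular {X : Type*} [Finite X] [TopologicalSpace X]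
    {𝒳 : Set (ℤ → X)} (h : IsSubshift 𝒳) (hL : Language.IsRegular (shiftLang 𝒳)) {x : ℤ → X}
    (hx : x ∈ 𝒳) (N : ℕ) :
    ∃ P ∈ 𝒳, ∃ p : ℕ, 0 < p ∧ Periodic P p ∧ ∀ m < p, ∃ t, wordAt P m N = wordAt x t N := by
  obtain ⟨i, p, hp, hpow, hblock⟩ := exists_pumpable_factor hL hx N
  have hper := periodic_periodicExtension x i p
  refine ⟨_, h.mem_of_periodic hper hp fun n hn => ?_, p, hp, hper,
    fun m hm => ⟨_, wordAt_periodicExtension hblock hm⟩⟩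
  rw [hper.wordAt_mul, wordAt_periodicExtension_zero]
  exact hpow n hn

/-- A sofic shift which is not minimal is conjugate to a subshift `𝒴` having a
non-empty word `z` in its language with `zⁿ ∈ L(𝒴)` for all `n ≥ 1` and whose set
of letters is a proper subset of the letters of `𝒴`. -/
theorem conjugate_with_word_avoiding_letter {X : Type*} [Fintype X] [TopologicalSpace X]
    [DiscreteTopology X] (𝒳 : Set (ℤ → X)) (h𝒳 : IsSubshift 𝒳)
    (hsofic : Language.IsRegular (shiftLang 𝒳))
    (hnotmin : ¬ ∀ 𝒴 : Set (ℤ → X), IsSubshift 𝒴 → 𝒴 ⊆ 𝒳 → 𝒴 = 𝒳) :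
    ∃ (Y : Type) (_ : Fintype Y) (_ : TopologicalSpace Y) (_ : DiscreteTopology Y)
      (𝒴 : Set (ℤ → Y)), IsSubshift 𝒴 ∧ AreConjugate 𝒳 𝒴 ∧
      ∃ z ∈ shiftLang 𝒴, (∀ n : ℕ, 1 ≤ n → wordPow n z ∈ shiftLang 𝒴) ∧
        {a : Y | a ∈ z} ⊂ {a : Y | [a] ∈ shiftLang 𝒴} := by
  obtain ⟨𝒳', h𝒳', hsub, hne⟩ : ∃ 𝒳', IsSubshift 𝒳' ∧ 𝒳' ⊆ 𝒳 ∧ 𝒳' ≠ 𝒳 := by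
    simpa using hnotmin
  obtain ⟨w, ⟨hw, x₀, hx₀, t₀, hw₀⟩, hw'⟩ : ∃ w ∈ shiftLang 𝒳, w ∉ shiftLang 𝒳' :=
    Set.not_subset.1 fun hL => hne (hsub.antisymm (h𝒳'.subset_of_shiftLang_subset hL))
  have hN : 0 < w.length := List.length_pos_iff.2 hw
  obtain ⟨x, hx⟩ := h𝒳'.1
  obtain ⟨P, hP, p, hp, hper, hblocks⟩ :=
    h𝒳.exists_periodic_mem_of_isRegular hsofic (hsub hx) w.length
  have he := (Fintype.equivFin X).injective
  set φ := blockCode (Fintype.equivFin X) w.length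
  have hφP : φ P ∈ φ '' 𝒳 := Set.mem_image_of_mem φ hP
  have hz : wordAt (φ P) 0 p ∈ shiftLang (φ '' 𝒳) := mem_shiftLang_wordAt hφP 0 hp
  refine ⟨_, inferInstance, inferInstance, inferInstance, φ '' 𝒳,
    h𝒳.image continuous_blockCode blockCode_shiftMap,
    areConjugate_image h𝒳.2.1 continuous_blockCode (blockCode_injective he hN).injOn
      blockCode_shiftMap,
    _, hz, fun n hn => ?_, fun a ha => singleton_mem_shiftLang_of_mem ha hz, fun hletters => ?_⟩
  · rw [← hper.blockCode.wordAt_mul]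
    exact mem_shiftLang_wordAt hφP 0 (by positivity)
  obtain ⟨m, hm, hφm⟩ :=
    mem_wordAt_iff.1 (hletters (singleton_mem_shiftLang (Set.mem_image_of_mem φ hx₀) t₀))
  obtain ⟨t, ht⟩ := hblocks m hm
  rw [zero_add, blockCode_eq_blockCode_iff he, ht] at hφm
  exact hw' (hw₀ ▸ hφm ▸ mem_shiftLang_wordAt hx t hN)
end

section
/- Let S be a compact semigroup and let J be a regular J-class of S. Then Fact(J) is a closed, non-empty, factorial, irreducible subset of S, and J is the unique minimal J-class of S contained in Fact(J) (i.e. J is the apex of Fact(J)). -/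
/-- `v` is a factor of `u`: `u ∈ S¹vS¹`. -/
def IsFactor {S : Type*} [Semigroup S] (v u : S) : Prop :=
  u = v ∨ (∃ x, u = x * v) ∨ (∃ y, u = v * y) ∨ ∃ x y, u = x * v * y

/-- A subset of a semigroup is factorial if it is closed under taking factors. -/
def IsFactorialSet {S : Type*} [Semigroup S] (L : Set S) : Prop :=
  ∀ u ∈ L, ∀ v : S, IsFactor v u → v ∈ L

/-- A subset of a semigroup is irreducible if any two of its elements can be
"glued" inside it. -/
def IsIrreducibleSet {S : Type*} [Semigroup S] (L : Set S) : Prop :=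
  ∀ u ∈ L, ∀ v ∈ L, ∃ w : S, u * w * v ∈ L

/-- Green's preorder: `u ≤_J v` iff `S¹uS¹ ⊆ S¹vS¹`, i.e. `v` is a factor of `u`. -/
def JLe {S : Type*} [Semigroup S] (u v : S) : Prop := IsFactor v u

/-- Green's relation `J`. -/
def JEq {S : Type*} [Semigroup S] (u v : S) : Prop := JLe u v ∧ JLe v u

/-- The `J`-class of an element. -/
def JClass {S : Type*} [Semigroup S] (u : S) : Set S := {x | JEq x u}

/-- The set of all factors of elements of `A`. -/
def FactSet {S : Type*} [Semigroup S] (A : Set S) : Set S :=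
  {v | ∃ u ∈ A, IsFactor v u}

lemma isFactor_refl {S : Type*} [Semigroup S] (u : S) : IsFactor u u := Or.inl rfl

lemma isFactor_mul_left {S : Type*} [Semigroup S] {v u : S} (x : S) (h : IsFactor v u) :
    IsFactor v (x * u) := by
  rcases h with rfl | ⟨a, rfl⟩ | ⟨b, rfl⟩ | ⟨a, b, rfl⟩
  · exact Or.inr (Or.inl ⟨x, rfl⟩)
  · exact Or.inr (Or.inl ⟨x * a, (mul_assoc ..).symm⟩)
  · exact Or.inr (Or.inr (Or.inr ⟨x, b, (mul_assoc ..).symm⟩))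
  · exact Or.inr (Or.inr (Or.inr ⟨x * a, b, by simp [mul_assoc]⟩))

lemma isFactor_mul_right {S : Type*} [Semigroup S] {v u : S} (y : S) (h : IsFactor v u) :
    IsFactor v (u * y) := by
  rcases h with rfl | ⟨a, rfl⟩ | ⟨b, rfl⟩ | ⟨a, b, rfl⟩
  · exact Or.inr (Or.inr (Or.inl ⟨y, rfl⟩))
  · exact Or.inr (Or.inr (Or.inr ⟨a, y, rfl⟩))
  · exact Or.inr (Or.inr (Or.inl ⟨b * y, mul_assoc ..⟩))
  · exact Or.inr (Or.inr (Or.inr ⟨a, b * y, by simp [mul_assoc]⟩))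

lemma isFactor_trans {S : Type*} [Semigroup S] {v u w : S}
    (h1 : IsFactor v u) (h2 : IsFactor u w) : IsFactor v w := by
  rcases h2 with rfl | ⟨x, rfl⟩ | ⟨y, rfl⟩ | ⟨x, y, rfl⟩
  · exact h1
  · exact isFactor_mul_left x h1
  · exact isFactor_mul_right y h1
  · exact isFactor_mul_right y (isFactor_mul_left x h1)

lemma isFactor_sandwich {S : Type*} [Semigroup S] {e u : S} (he : IsIdempotentElem e)
    (h : IsFactor u e) : ∃ a b, e = a * u * b := by
  rcases h with rfl | ⟨x, rfl⟩ | ⟨y, rfl⟩ | ⟨x, y, rfl⟩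
  · exact ⟨e, e, by rw [he, he]⟩
  · exact ⟨x, x * u, he.symm⟩
  · exact ⟨u * y, y, by rw [mul_assoc]; exact he.symm⟩
  · exact ⟨x, y, rfl⟩

lemma isClosed_factors {S : Type*} [Semigroup S] [TopologicalSpace S] [CompactSpace S]
    [T2Space S] [ContinuousMul S] (e : S) : IsClosed {v : S | IsFactor v e} := by
  have h1 : {v : S | IsFactor v e} =
      {e} ∪ (Prod.snd '' {p : S × S | e = p.1 * p.2})
        ∪ (Prod.fst '' {p : S × S | e = p.1 * p.2})
        ∪ ((fun p : S × S × S => p.2.1) '' {p : S × S × S | e = p.1 * p.2.1 * p.2.2}) := by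
    ext v
    simp only [Set.mem_setOf_eq, IsFactor, Set.mem_union, Set.mem_singleton_iff,
      Set.mem_image, Prod.exists]
    constructor
    · rintro (h | ⟨x, h⟩ | ⟨y, h⟩ | ⟨x, y, h⟩)
      · exact Or.inl (Or.inl (Or.inl h.symm))
      · exact Or.inl (Or.inl (Or.inr ⟨x, v, h, rfl⟩))
      · exact Or.inl (Or.inr ⟨v, y, h, rfl⟩)
      · exact Or.inr ⟨x, v, y, h, rfl⟩
    · rintro (((h | ⟨x, v, h, rfl⟩) | ⟨v, y, h, rfl⟩) | ⟨x, v, y, h, rfl⟩)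
      · exact Or.inl h.symm
      · exact Or.inr (Or.inl ⟨x, h⟩)
      · exact Or.inr (Or.inr (Or.inl ⟨y, h⟩))
      · exact Or.inr (Or.inr (Or.inr ⟨x, y, h⟩))
  rw [h1]
  have hc2 : IsClosed {p : S × S | e = p.1 * p.2} := by
    have : {p : S × S | e = p.1 * p.2} = (fun p : S × S => p.1 * p.2) ⁻¹' {e} := by
      ext p; simp [eq_comm]
    rw [this]
    exact (isClosed_singleton).preimage (continuous_fst.mul continuous_snd)
  have hc3 : IsClosed {p : S × S × S | e = p.1 * p.2.1 * p.2.2} := by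
    have : {p : S × S × S | e = p.1 * p.2.1 * p.2.2}
        = (fun p : S × S × S => p.1 * p.2.1 * p.2.2) ⁻¹' {e} := by
      ext p; simp [eq_comm]
    rw [this]
    exact (isClosed_singleton).preimage
      ((continuous_fst.mul (continuous_fst.comp continuous_snd)).mul
        (continuous_snd.comp continuous_snd))
  exact (((isClosed_singleton.union
      ((hc2.isCompact.image continuous_snd).isClosed)).union
      ((hc2.isCompact.image continuous_fst).isClosed)).union
      ((hc3.isCompact.image (continuous_fst.comp continuous_snd)).isClosed))

lemma mem_factSet_jclass {S : Type*} [Semigroup S] {e v : S} :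
    v ∈ FactSet (JClass e) ↔ IsFactor v e := by
  constructor
  · rintro ⟨u, ⟨-, hu⟩, hv⟩
    exact isFactor_trans hv hu
  · intro h
    exact ⟨e, ⟨isFactor_refl e, isFactor_refl e⟩, h⟩

/-- For a regular `J`-class `J` (the `J`-class of an idempotent `e`) of a compact
semigroup, `Fact(J)` is a closed, non-empty, factorial, irreducible subset, and
`J` is the unique minimal `J`-class contained in `Fact(J)` (its apex). -/
theorem factSet_of_regular_JClass {S : Type*} [Semigroup S] [Nonempty S]
    [TopologicalSpace S] [CompactSpace S] [T2Space S] [ContinuousMul S]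
    (e : S) (he : IsIdempotentElem e) :
    IsClosed (FactSet (JClass e)) ∧ (FactSet (JClass e)).Nonempty ∧
    IsFactorialSet (FactSet (JClass e)) ∧ IsIrreducibleSet (FactSet (JClass e)) ∧
    JClass e ⊆ FactSet (JClass e) ∧
    -- `JClass e` is minimal among `J`-classes contained in `Fact(JClass e)`
    (∀ v ∈ FactSet (JClass e), JLe v e → JEq v e) ∧
    -- and it is the unique such minimal `J`-class
    (∀ u ∈ FactSet (JClass e),
      (∀ v ∈ FactSet (JClass e), JLe v u → JEq v u) → JEq u e) := by
  have hset : FactSet (JClass e) = {v : S | IsFactor v e} := by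
    ext v; exact mem_factSet_jclass
  refine ⟨?_, ?_, ?_, ?_, ?_, ?_, ?_⟩
  · rw [hset]; exact isClosed_factors e
  · exact ⟨e, mem_factSet_jclass.mpr (isFactor_refl e)⟩
  · intro u hu v hv
    exact mem_factSet_jclass.mpr (isFactor_trans hv (mem_factSet_jclass.mp hu))
  · intro u hu v hv
    obtain ⟨a, b, hab⟩ := isFactor_sandwich he (mem_factSet_jclass.mp hu)
    obtain ⟨c, d, hcd⟩ := isFactor_sandwich he (mem_factSet_jclass.mp hv)
    refine ⟨b * c, mem_factSet_jclass.mpr (Or.inr (Or.inr (Or.inr ⟨a, d, ?_⟩)))⟩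
    calc e = e * e := he.symm
      _ = (a * u * b) * (c * v * d) := by rw [← hab, ← hcd]
      _ = a * (u * (b * c) * v) * d := by simp [mul_assoc]
  · intro u hu
    exact mem_factSet_jclass.mpr hu.2
  · intro v hv hle
    exact ⟨hle, mem_factSet_jclass.mp hv⟩
  · intro u hu hmin
    have h := hmin e (mem_factSet_jclass.mpr (isFactor_refl e)) (mem_factSet_jclass.mp hu)
    exact ⟨h.2, h.1⟩
end
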